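/- Let 0 < α ≤ 1 and let μ be a Borel probability measure on ℝ with d_μ^{α,∞} < ∞. Then for every z ∈ ℂ with Im z ≠ 0, |Im z|^{1−α} · |Im F_μ(z)| ≤ 2^α · π · d_μ^{α,∞}. -/

import Mathlib

/-!
Write `z = a + iy` and `d = d_μ^{α,∞}`. The integrand of `Im F_μ(z)` has absolute value
`|y| / ((x - a)² + y²)`, which is at most `1/|y|` and exceeds a level `t` only on the interval
of radius `√(|y|/t)` about `a`. Hölder continuity bounds the measure of that superlevel set by
`d · 2^α |y|^{α/2} t^{-α/2}`, and the layer-cake formula over `0 < t < 1/|y|` gives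
`∫ |y| / ((x - a)² + y²) dμ ≤ d · 2^α |y|^{α-1} / (1 - α/2)`. For `α ≤ 1` the last factor is
at most `2 ≤ π`.
-/

open MeasureTheory Complex Set

/-- The Borel transform of a measure `σ` on `ℝ`: `F_σ(z) = ∫ 1/(x - z) dσ(x)`. -/
noncomputable def borelTransform (σ : Measure ℝ) (z : ℂ) : ℂ :=
  ∫ x : ℝ, ((x : ℂ) - z)⁻¹ ∂σ

/-- `d_μ^{α,∞} = sup_{x ∈ ℝ} sup_{ε > 0} μ((x−ε, x+ε))/(2ε)^α`. -/
noncomputable def dAlpha (μ : Measure ℝ) (α : ℝ) : ENNReal :=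
  ⨆ (x : ℝ) (ε : ℝ) (_ : 0 < ε),
    μ (Set.Ioo (x - ε) (x + ε)) / ENNReal.ofReal ((2 * ε) ^ α)

open scoped ENNReal

theorem MeasureTheory.lintegral_ofReal_le_of_meas_lt_le_rpow {X : Type*} [MeasurableSpace X]
    {μ : Measure X} {f : X → ℝ} (hf0 : 0 ≤ f) (hfm : AEMeasurable f μ) {T β : ℝ} {C : ℝ≥0∞}
    (hT : 0 < T) (hfT : ∀ x, f x ≤ T) (hβ : β < 1)
    (hC : ∀ t ∈ Ioo 0 T, μ {x | t < f x} ≤ C * ENNReal.ofReal (t ^ (-β))) :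
    ∫⁻ x, ENNReal.ofReal (f x) ∂μ ≤ C * ENNReal.ofReal (T ^ (1 - β) / (1 - β)) := by
  set bound : ℝ → ℝ≥0∞ := fun t ↦ C * ENNReal.ofReal (t ^ (-β))
  have hlevel : ∀ t ∈ Ioi (0 : ℝ), μ {x | t < f x} ≤ (Ioo 0 T).indicator bound t := by
    intro t ht
    by_cases htT : t < T
    · rw [indicator_of_mem (show t ∈ Ioo 0 T from ⟨ht, htT⟩)]
      exact hC t ⟨ht, htT⟩
    · have hempty : {x | t < f x} = ∅ :=
        eq_empty_of_forall_notMem fun x hx ↦ htT ((show t < f x from hx).trans_le (hfT x))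
      simp [hempty]
  have hintegrable : IntegrableOn (fun t : ℝ ↦ t ^ (-β)) (Ioo 0 T) :=
    (intervalIntegral.integrableOn_Ioo_rpow_iff hT).2 (by linarith)
  have hintegral : ∫ t in Ioo 0 T, t ^ (-β) = T ^ (1 - β) / (1 - β) := by
    rw [← integral_Ioc_eq_integral_Ioo, ← intervalIntegral.integral_of_le hT.le,
      integral_rpow (Or.inl (by linarith)), Real.zero_rpow (by linarith), sub_zero,
      neg_add_eq_sub]
  calc ∫⁻ x, ENNReal.ofReal (f x) ∂μ = ∫⁻ t in Ioi 0, μ {x | t < f x} :=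
        lintegral_eq_lintegral_meas_lt μ (ae_of_all _ hf0) hfm
    _ ≤ ∫⁻ t in Ioi 0, (Ioo 0 T).indicator bound t := setLIntegral_mono' measurableSet_Ioi hlevel
    _ ≤ ∫⁻ t, (Ioo 0 T).indicator bound t := setLIntegral_le_lintegral _ _
    _ = C * ∫⁻ t in Ioo 0 T, ENNReal.ofReal (t ^ (-β)) := by
        rw [lintegral_indicator measurableSet_Ioo, lintegral_const_mul _ (by fun_prop)]
    _ = C * ENNReal.ofReal (T ^ (1 - β) / (1 - β)) := by
        rw [← ofReal_integral_eq_lintegral_ofReal hintegrable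
          ((ae_restrict_mem measurableSet_Ioo).mono fun t ht ↦ Real.rpow_nonneg ht.1.le _),
          hintegral]

theorem abs_im_integral_le_integral_abs_im {X : Type*} [MeasurableSpace X] {μ : Measure X}
    (f : X → ℂ) : |(∫ x, f x ∂μ).im| ≤ ∫ x, |(f x).im| ∂μ := by
  by_cases hf : Integrable f μ
  · rw [← RCLike.im_to_complex, ← integral_im hf]
    exact abs_integral_le_integral_abs
  · rw [integral_undef hf, zero_im, abs_zero]
    exact integral_nonneg fun x ↦ abs_nonneg _

theorem abs_im_inv_ofReal_sub (x : ℝ) (z : ℂ) :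
    |(((x : ℂ) - z)⁻¹).im| = |z.im| / ((x - z.re) ^ 2 + z.im ^ 2) := by
  rw [inv_im, normSq_apply, abs_div, abs_neg]
  simp only [sub_re, sub_im, ofReal_re, ofReal_im, zero_sub, abs_neg, ← sq, neg_sq]
  rw [abs_of_nonneg (a := (x - z.re) ^ 2 + z.im ^ 2) (by positivity)]

theorem Complex.abs_im_inv_le_inv_abs_im (w : ℂ) : |w⁻¹.im| ≤ |w.im|⁻¹ := by
  rcases eq_or_ne w.im 0 with h | h
  · simp [inv_im, h]
  calc |w⁻¹.im| = |w.im| / normSq w := by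
        rw [inv_im, abs_div, abs_neg, abs_of_nonneg (normSq_nonneg w)]
    _ ≤ |w.im| / |w.im| ^ 2 :=
        div_le_div_of_nonneg_left (abs_nonneg _) (by positivity)
          (by rw [sq_abs, normSq_apply]; nlinarith [mul_self_nonneg w.re])
    _ = |w.im|⁻¹ := by field_simp

theorem abs_im_inv_ofReal_sub_le (x : ℝ) (z : ℂ) : |(((x : ℂ) - z)⁻¹).im| ≤ |z.im|⁻¹ := by
  simpa using abs_im_inv_le_inv_abs_im ((x : ℂ) - z)

theorem setOf_lt_abs_im_inv_ofReal_sub_subset {z : ℂ} (hz : z.im ≠ 0) {t : ℝ} (ht : 0 < t) :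
    {x : ℝ | t < |(((x : ℂ) - z)⁻¹).im|} ⊆
      Ioo (z.re - √(|z.im| / t)) (z.re + √(|z.im| / t)) := by
  intro x hx
  rw [mem_ofPred_eq, abs_im_inv_ofReal_sub, lt_div_iff₀ (by positivity)] at hx
  have hsq : (x - z.re) ^ 2 < |z.im| / t := by
    rw [lt_div_iff₀ ht]
    nlinarith [sq_nonneg z.im]
  obtain ⟨hleft, hright⟩ := abs_lt.1 ((Real.lt_sqrt (abs_nonneg _)).2 (by rwa [sq_abs]))
  constructor <;> linarith

theorem measure_Ioo_le_dAlpha_mul (μ : Measure ℝ) (α x : ℝ) {ε : ℝ} (hε : 0 < ε) :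
    μ (Ioo (x - ε) (x + ε)) ≤ dAlpha μ α * ENNReal.ofReal ((2 * ε) ^ α) := by
  rw [← ENNReal.div_le_iff (by positivity) ENNReal.ofReal_ne_top]
  exact le_iSup₂_of_le x ε (le_iSup_of_le hε le_rfl)

theorem measure_lt_abs_im_inv_ofReal_sub_le (μ : Measure ℝ) (α : ℝ) {z : ℂ} (hz : z.im ≠ 0)
    {t : ℝ} (ht : 0 < t) :
    μ {x : ℝ | t < |(((x : ℂ) - z)⁻¹).im|} ≤
      dAlpha μ α * ENNReal.ofReal (2 ^ α * |z.im| ^ (α / 2)) * ENNReal.ofReal (t ^ (-(α / 2))) := by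
  have hy : 0 < |z.im| := abs_pos.2 hz
  have hradius : (2 * √(|z.im| / t)) ^ α = 2 ^ α * |z.im| ^ (α / 2) * t ^ (-(α / 2)) := by
    rw [Real.mul_rpow zero_le_two (Real.sqrt_nonneg _), Real.sqrt_eq_rpow,
      ← Real.rpow_mul (by positivity), one_div_mul_eq_div, Real.div_rpow hy.le ht.le,
      Real.rpow_neg ht.le, div_eq_mul_inv, mul_assoc]
  calc μ {x : ℝ | t < |(((x : ℂ) - z)⁻¹).im|}
      ≤ μ (Ioo (z.re - √(|z.im| / t)) (z.re + √(|z.im| / t))) :=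
        measure_mono (setOf_lt_abs_im_inv_ofReal_sub_subset hz ht)
    _ ≤ dAlpha μ α * ENNReal.ofReal ((2 * √(|z.im| / t)) ^ α) :=
        measure_Ioo_le_dAlpha_mul μ α z.re (by positivity)
    _ = _ := by
        rw [hradius, ENNReal.ofReal_mul (by positivity), mul_assoc]

theorem integral_abs_im_inv_ofReal_sub_le (μ : Measure ℝ) {α : ℝ} (hα : α < 2)
    (hμ : dAlpha μ α ≠ ⊤) {z : ℂ} (hz : z.im ≠ 0) :
    ∫ x, |(((x : ℂ) - z)⁻¹).im| ∂μ ≤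
      (dAlpha μ α).toReal * 2 ^ α * |z.im| ^ (α - 1) / (1 - α / 2) := by
  have hy : 0 < |z.im| := abs_pos.2 hz
  have hβ : 0 < 1 - α / 2 := by linarith
  have hKJ : 2 ^ α * |z.im| ^ (α / 2) * (|z.im|⁻¹ ^ (1 - α / 2) / (1 - α / 2)) =
      2 ^ α * |z.im| ^ (α - 1) / (1 - α / 2) := by
    rw [Real.inv_rpow hy.le, ← Real.rpow_neg hy.le, mul_div_assoc', mul_assoc, ← Real.rpow_add hy]
    ring_nf
  have hlayer := lintegral_ofReal_le_of_meas_lt_le_rpow (μ := μ)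
    (f := fun x : ℝ ↦ |(((x : ℂ) - z)⁻¹).im|) (fun x ↦ abs_nonneg _) (by fun_prop)
    (inv_pos.2 hy) (abs_im_inv_ofReal_sub_le · z) (by linarith)
    (fun t ht ↦ measure_lt_abs_im_inv_ofReal_sub_le μ α hz ht.1)
  rw [integral_eq_lintegral_of_nonneg_ae (ae_of_all _ fun x ↦ abs_nonneg _) (by fun_prop)]
  calc _ ≤ _ := ENNReal.toReal_mono (by finiteness) hlayer
    _ = _ := by
        rw [ENNReal.toReal_mul, ENNReal.toReal_mul, ENNReal.toReal_ofReal (by positivity),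
          ENNReal.toReal_ofReal (by positivity), mul_assoc, hKJ]
        ring

theorem stmt12_general (α : ℝ) (hα1 : α ≤ 1)
    (μ : Measure ℝ) (hμ : dAlpha μ α ≠ ⊤)
    (z : ℂ) (hz : z.im ≠ 0) :
    |z.im| ^ (1 - α) * |(borelTransform μ z).im| ≤
      2 ^ α * Real.pi * (dAlpha μ α).toReal := by
  have hy : 0 < |z.im| := abs_pos.2 hz
  have hinv_le_pi : (1 - α / 2)⁻¹ ≤ Real.pi :=
    calc (1 - α / 2)⁻¹ ≤ 2 := by rw [inv_le_comm₀ (by linarith) two_pos]; linarith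
      _ ≤ Real.pi := Real.two_le_pi
  calc |z.im| ^ (1 - α) * |(borelTransform μ z).im|
      ≤ |z.im| ^ (1 - α) * ((dAlpha μ α).toReal * 2 ^ α * |z.im| ^ (α - 1) / (1 - α / 2)) := by
        gcongr
        exact (abs_im_integral_le_integral_abs_im _).trans
          (integral_abs_im_inv_ofReal_sub_le μ (by linarith) hμ hz)
    _ = 2 ^ α * (1 - α / 2)⁻¹ * (dAlpha μ α).toReal := by
        have hcancel : |z.im| ^ (1 - α) * |z.im| ^ (α - 1) = 1 := by
          rw [← Real.rpow_add hy, sub_add_sub_cancel', sub_self, Real.rpow_zero]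
        linear_combination ((dAlpha μ α).toReal * 2 ^ α / (1 - α / 2)) * hcancel
    _ ≤ 2 ^ α * Real.pi * (dAlpha μ α).toReal := by gcongr

theorem stmt12 (α : ℝ) (hα0 : 0 < α) (hα1 : α ≤ 1)
    (μ : Measure ℝ) [IsProbabilityMeasure μ] (hμ : dAlpha μ α ≠ ⊤)
    (z : ℂ) (hz : z.im ≠ 0) :
    |z.im| ^ (1 - α) * |(borelTransform μ z).im| ≤
      2 ^ α * Real.pi * (dAlpha μ α).toReal :=
  stmt12_general α hα1 μ hμ z hz
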